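/- If V is a multiplicative partial isometry (i.e. a partial isometry on H⊗H satisfying the pentagon equation V₂₃V₁₂ = V₁₂V₁₃V₂₃ together with V₁₃V₂₃V₂₃* = V₁₂*V₁₂V₁₃, V₁₂V₁₂*V₂₃ = V₂₃V₁₂V₁₂*, and V₁₂V₂₃*V₂₃ = V₂₃*V₂₃V₁₂), then V₁₂V₂₃* = V₂₃*V₁₂V₁₃. -/
import Mathlib


open Matrix

namespace MPIpaper

variable {n : Type*} [Fintype n] [DecidableEq n]

noncomputable section

/-- `W₁₂ = W ⊗ 1` on `H ⊗ H ⊗ H`. -/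
def leg12 (V : Matrix (n × n) (n × n) ℂ) : Matrix (n × n × n) (n × n × n) ℂ :=
  Matrix.of fun p q => V (p.1, p.2.1) (q.1, q.2.1) * (if p.2.2 = q.2.2 then (1 : ℂ) else 0)

/-- `W₂₃ = 1 ⊗ W` on `H ⊗ H ⊗ H`. -/
def leg23 (V : Matrix (n × n) (n × n) ℂ) : Matrix (n × n × n) (n × n × n) ℂ :=
  Matrix.of fun p q => (if p.1 = q.1 then (1 : ℂ) else 0) * V p.2 q.2

/-- `W₁₃ = (1⊗Σ)(W⊗1)(1⊗Σ)` on `H ⊗ H ⊗ H`. -/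
def leg13 (V : Matrix (n × n) (n × n) ℂ) : Matrix (n × n × n) (n × n × n) ℂ :=
  Matrix.of fun p q => V (p.1, p.2.2) (q.1, q.2.2) * (if p.2.1 = q.2.1 then (1 : ℂ) else 0)

/-- A multiplicative partial isometry: `VV*V = V`, the pentagon equation, and the
three auxiliary (hexagon-type) equations. -/
def IsMPI (V : Matrix (n × n) (n × n) ℂ) : Prop :=
  V * Vᴴ * V = V ∧
  leg23 V * leg12 V = leg12 V * leg13 V * leg23 V ∧
  leg13 V * leg23 V * (leg23 V)ᴴ = (leg12 V)ᴴ * leg12 V * leg13 V ∧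
  leg12 V * (leg12 V)ᴴ * leg23 V = leg23 V * leg12 V * (leg12 V)ᴴ ∧
  leg12 V * (leg23 V)ᴴ * leg23 V = (leg23 V)ᴴ * leg23 V * leg12 V

/-- `λ(ω) = (ω ⊗ id)(V)`. -/
def lam (ω : Matrix n n ℂ →ₗ[ℂ] ℂ) (V : Matrix (n × n) (n × n) ℂ) : Matrix n n ℂ :=
  Matrix.of fun i j => ω (Matrix.of fun a b => V (a, i) (b, j))

/-- `ρ(ω) = (id ⊗ ω)(V)`. -/
def rho (ω : Matrix n n ℂ →ₗ[ℂ] ℂ) (V : Matrix (n × n) (n × n) ℂ) : Matrix n n ℂ :=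
  Matrix.of fun i j => ω (Matrix.of fun a b => V (i, a) (j, b))

/-- `1 ⊗ X` on `H ⊗ H`. -/
def oneTensor (X : Matrix n n ℂ) : Matrix (n × n) (n × n) ℂ :=
  Matrix.of fun p q => (if p.1 = q.1 then (1 : ℂ) else 0) * X p.2 q.2

/-- `X ⊗ 1` on `H ⊗ H`. -/
def tensorOne (X : Matrix n n ℂ) : Matrix (n × n) (n × n) ℂ :=
  Matrix.of fun p q => X p.1 q.1 * (if p.2 = q.2 then (1 : ℂ) else 0)

/-- `Δ(X) = V (X ⊗ 1) V*`. -/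
def Delta (V : Matrix (n × n) (n × n) ℂ) (X : Matrix n n ℂ) : Matrix (n × n) (n × n) ℂ :=
  V * tensorOne X * Vᴴ

/-- `Δ̂(X) = V* (1 ⊗ X) V`. -/
def hatDelta (V : Matrix (n × n) (n × n) ℂ) (X : Matrix n n ℂ) : Matrix (n × n) (n × n) ℂ :=
  Vᴴ * oneTensor X * V

/-- `(ω ⊗ ω')(W)` for an operator `W` on `H ⊗ H`. -/
def applyBoth (ω ω' : Matrix n n ℂ →ₗ[ℂ] ℂ) (W : Matrix (n × n) (n × n) ℂ) : ℂ :=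
  ω (Matrix.of fun i j => ω' (Matrix.of fun k l => W (i, k) (j, l)))

end


lemma leg12_mul (A B : Matrix (n × n) (n × n) ℂ) :
    leg12 A * leg12 B = leg12 (A * B) := by
  ext p r
  simp only [leg12, Matrix.mul_apply, Matrix.of_apply, Fintype.sum_prod_type]
  simp [mul_ite, ite_mul, Finset.mul_sum, Finset.sum_mul, mul_comm, mul_left_comm]

lemma leg23_mul (A B : Matrix (n × n) (n × n) ℂ) :
    leg23 A * leg23 B = leg23 (A * B) := by
  ext p r
  simp only [leg23, Matrix.mul_apply, Matrix.of_apply, Fintype.sum_prod_type]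
  simp [mul_ite, ite_mul, Finset.mul_sum, Finset.sum_mul, mul_comm, mul_left_comm]

lemma leg12_conjT (A : Matrix (n × n) (n × n) ℂ) :
    (leg12 A)ᴴ = leg12 Aᴴ := by
  ext p r
  simp [leg12, Matrix.conjTranspose_apply, eq_comm, apply_ite (starRingEnd ℂ)]

lemma leg23_conjT (A : Matrix (n × n) (n × n) ℂ) :
    (leg23 A)ᴴ = leg23 Aᴴ := by
  ext p r
  simp [leg23, Matrix.conjTranspose_apply, eq_comm, apply_ite (starRingEnd ℂ)]

theorem statement2 (V : Matrix (n × n) (n × n) ℂ) (hV : IsMPI V) :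
    leg12 V * (leg23 V)ᴴ = (leg23 V)ᴴ * leg12 V * leg13 V := by
  obtain ⟨hpi, hpent, hA, hB, hC⟩ := hV
  have h12 : leg12 V * (leg12 V)ᴴ * leg12 V = leg12 V := by
    rw [leg12_conjT, leg12_mul, leg12_mul, hpi]
  have h23 : leg23 V * (leg23 V)ᴴ * leg23 V = leg23 V := by
    rw [leg23_conjT, leg23_mul, leg23_mul, hpi]
  have h23' : (leg23 V)ᴴ * leg23 V * (leg23 V)ᴴ = (leg23 V)ᴴ := by
    calc (leg23 V)ᴴ * leg23 V * (leg23 V)ᴴ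
        = (leg23 V * (leg23 V)ᴴ * leg23 V)ᴴ := by
          simp [Matrix.conjTranspose_mul, mul_assoc]
      _ = (leg23 V)ᴴ := by rw [h23]
  calc leg12 V * (leg23 V)ᴴ
      = leg12 V * ((leg23 V)ᴴ * leg23 V * (leg23 V)ᴴ) := by rw [h23']
    _ = leg12 V * (leg23 V)ᴴ * leg23 V * (leg23 V)ᴴ := by
        simp only [mul_assoc]
    _ = (leg23 V)ᴴ * leg23 V * leg12 V * (leg23 V)ᴴ := by rw [hC]
    _ = (leg23 V)ᴴ * (leg23 V * leg12 V) * (leg23 V)ᴴ := by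
        simp only [mul_assoc]
    _ = (leg23 V)ᴴ * (leg12 V * leg13 V * leg23 V) * (leg23 V)ᴴ := by rw [hpent]
    _ = (leg23 V)ᴴ * leg12 V * (leg13 V * leg23 V * (leg23 V)ᴴ) := by
        simp only [mul_assoc]
    _ = (leg23 V)ᴴ * leg12 V * ((leg12 V)ᴴ * leg12 V * leg13 V) := by rw [hA]
    _ = (leg23 V)ᴴ * (leg12 V * (leg12 V)ᴴ * leg12 V) * leg13 V := by
        simp only [mul_assoc]
    _ = (leg23 V)ᴴ * leg12 V * leg13 V := by rw [h12]


end MPIpaper
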